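/- arXiv:2206.10713 — 6 statements merged into one kernel-verified Lean document; each statement's English description precedes it below -/
import Mathlib

section
/- Let v(ζ) be a random vector in ℝ^d with E[v(ζ)] = v, and for τ > 0 define clip(z, τ) = z · min(1, τ/‖z‖). Then for any p > 1, the clipping bias satisfies ‖v − E[clip(v(ζ), τ)]‖ ≤ (E[‖v(ζ)‖^p])^{1/p} · (P(‖v(ζ)‖ ≥ τ))^{1 − 1/p} − τ · P(‖v(ζ)‖ ≥ τ). -/
open MeasureTheory

noncomputable def clip {d : ℕ} (z : EuclideanSpace ℝ (Fin d)) (τ : ℝ) :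
    EuclideanSpace ℝ (Fin d) := (min 1 (τ / ‖z‖)) • z

/-!
Let `A` be the event `{τ ≤ ‖v(ζ)‖}`. Off `A` clipping does nothing, and on `A` it moves `v(ζ)`
towards `0` by exactly `‖v(ζ)‖ - τ`, so the bias is at most
`E[(‖v(ζ)‖ - τ) 1_A] = E[‖v(ζ)‖ 1_A] - τ P(A)`. Hölder's inequality for the pair `‖v(ζ)‖`, `1_A`
bounds `E[‖v(ζ)‖ 1_A]` by `E[‖v(ζ)‖^p]^{1/p} P(A)^{1 - 1/p}`.
-/

section Clip

variable {d : ℕ}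

theorem clip_of_norm_le {z : EuclideanSpace ℝ (Fin d)} {τ : ℝ} (h : ‖z‖ ≤ τ) : clip z τ = z := by
  rcases eq_or_ne z 0 with rfl | hz
  · simp [clip]
  · have hz' : 0 < ‖z‖ := norm_pos_iff.2 hz
    rw [clip, min_eq_left ((one_le_div hz').2 h), one_smul]

theorem norm_sub_clip_of_le_norm {z : EuclideanSpace ℝ (Fin d)} {τ : ℝ} (h : τ ≤ ‖z‖) :
    ‖z - clip z τ‖ ≤ ‖z‖ - τ := by
  rcases eq_or_ne z 0 with rfl | hz
  · simpa [clip] using h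
  · have hz' : 0 < ‖z‖ := norm_pos_iff.2 hz
    have hscale : τ / ‖z‖ ≤ 1 := (div_le_one hz').2 h
    rw [clip, min_eq_right hscale, show z - (τ / ‖z‖) • z = (1 - τ / ‖z‖) • z by module,
      norm_smul, Real.norm_of_nonneg (sub_nonneg.2 hscale), sub_mul, one_mul,
      div_mul_cancel₀ _ hz'.ne']

theorem norm_sub_clip_le_indicator (z : EuclideanSpace ℝ (Fin d)) (τ : ℝ) :
    ‖z - clip z τ‖ ≤ {x | τ ≤ ‖x‖}.indicator (fun x => ‖x‖ - τ) z := by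
  by_cases h : τ ≤ ‖z‖
  · rw [Set.indicator_of_mem (show z ∈ {x | τ ≤ ‖x‖} from h)]
    exact norm_sub_clip_of_le_norm h
  · rw [Set.indicator_of_notMem (show z ∉ {x | τ ≤ ‖x‖} from h),
      clip_of_norm_le (not_le.1 h).le, sub_self, norm_zero]

theorem norm_clip_le (z : EuclideanSpace ℝ (Fin d)) {τ : ℝ} (hτ : 0 ≤ τ) : ‖clip z τ‖ ≤ ‖z‖ := by
  rw [clip, norm_smul, Real.norm_of_nonneg (le_min zero_le_one (div_nonneg hτ (norm_nonneg z)))]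
  exact mul_le_of_le_one_left (norm_nonneg z) (min_le_left _ _)

theorem measurable_clip (τ : ℝ) : Measurable fun z : EuclideanSpace ℝ (Fin d) => clip z τ :=
  (measurable_const.min (measurable_const.div measurable_norm)).smul measurable_id

end Clip

section Integral

variable {Ω : Type*} [MeasurableSpace Ω] {μ : Measure Ω} [IsFiniteMeasure μ]

theorem setIntegral_norm_le_integral_norm_rpow_mul {E : Type*} [NormedAddCommGroup E]
    {f : Ω → E} (hf : AEStronglyMeasurable f μ) {p : ℝ} (hp : 1 < p)
    (hfp : Integrable (fun ω => ‖f ω‖ ^ p) μ) (s : Set Ω) :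
    ∫ ω in s, ‖f ω‖ ∂μ ≤ (∫ ω, ‖f ω‖ ^ p ∂μ) ^ (1 / p) * μ.real s ^ (1 - 1 / p) := by
  have hpq := Real.HolderConjugate.conjExponent hp
  have hp0 : 0 < p := zero_lt_one.trans hp
  have hf_mem : MemLp (fun ω => ‖f ω‖) (ENNReal.ofReal p) (μ.restrict s) := by
    refine ((integrable_norm_rpow_iff hf (by simpa using hp0) ENNReal.ofReal_ne_top).1 ?_).norm
      |>.restrict s
    rwa [ENNReal.toReal_ofReal hp0.le]
  have holder := integral_mul_le_Lp_mul_Lq_of_nonneg hpq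
    (ae_of_all _ fun ω => norm_nonneg (f ω)) (ae_of_all _ fun _ => zero_le_one) hf_mem
    (memLp_const (1 : ℝ))
  simp only [mul_one, Real.one_rpow, integral_const, smul_eq_mul,
    measureReal_restrict_apply_univ] at holder
  calc ∫ ω in s, ‖f ω‖ ∂μ
      ≤ (∫ ω in s, ‖f ω‖ ^ p ∂μ) ^ (1 / p) * μ.real s ^ (1 / p.conjExponent) := holder
    _ ≤ (∫ ω, ‖f ω‖ ^ p ∂μ) ^ (1 / p) * μ.real s ^ (1 - 1 / p) := by
      rw [one_div p.conjExponent, ← hpq.one_sub_inv, one_div]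
      have hmoment : ∫ ω in s, ‖f ω‖ ^ p ∂μ ≤ ∫ ω, ‖f ω‖ ^ p ∂μ :=
        setIntegral_le_integral hfp (ae_of_all _ fun ω => by positivity)
      gcongr

theorem norm_integral_sub_integral_clip_le {d : ℕ} {V : Ω → EuclideanSpace ℝ (Fin d)}
    (hV : Integrable V μ) {τ : ℝ} (hτ : 0 ≤ τ) :
    ‖∫ ω, V ω ∂μ - ∫ ω, clip (V ω) τ ∂μ‖ ≤
      ∫ ω in {ω | τ ≤ ‖V ω‖}, ‖V ω‖ ∂μ - τ * μ.real {ω | τ ≤ ‖V ω‖} := by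
  set A := {ω | τ ≤ ‖V ω‖}
  have hA : NullMeasurableSet A μ :=
    nullMeasurableSet_le aemeasurable_const hV.norm.aemeasurable
  have hclip : Integrable (fun ω => clip (V ω) τ) μ :=
    hV.norm.mono' ((measurable_clip τ).comp_aemeasurable hV.aemeasurable).aestronglyMeasurable
      (ae_of_all _ fun ω => norm_clip_le (V ω) hτ)
  have hexcess : Integrable (A.indicator fun ω => ‖V ω‖ - τ) μ :=
    (hV.norm.sub (integrable_const τ)).integrableOn.integrable_indicator₀ hA
  calc ‖∫ ω, V ω ∂μ - ∫ ω, clip (V ω) τ ∂μ‖ = ‖∫ ω, (V ω - clip (V ω) τ) ∂μ‖ := by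
        rw [integral_sub hV hclip]
    _ ≤ ∫ ω, ‖V ω - clip (V ω) τ‖ ∂μ := norm_integral_le_integral_norm _
    _ ≤ ∫ ω, A.indicator (fun ω => ‖V ω‖ - τ) ω ∂μ :=
        integral_mono (hV.sub hclip).norm hexcess fun ω => norm_sub_clip_le_indicator (V ω) τ
    _ = ∫ ω in A, ‖V ω‖ ∂μ - τ * μ.real A := by
        rw [integral_indicator₀ hA, integral_sub hV.norm.integrableOn (integrableOn_const ..),
          setIntegral_const, smul_eq_mul, mul_comm]

end Integral

theorem clipping_bias_general {d : ℕ} {Ω : Type*} [MeasurableSpace Ω] (P : MeasureTheory.Measure Ω)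
    [MeasureTheory.IsProbabilityMeasure P]
    (V : Ω → EuclideanSpace ℝ (Fin d)) (v : EuclideanSpace ℝ (Fin d))
    (hint : MeasureTheory.Integrable V P) (hmean : (∫ ω, V ω ∂P) = v)
    (p τ : ℝ) (hp : 1 < p) (hτ : 0 < τ)
    (hmom : MeasureTheory.Integrable (fun ω => ‖V ω‖ ^ p) P) :
    ‖v - ∫ ω, clip (V ω) τ ∂P‖ ≤
      (∫ ω, ‖V ω‖ ^ p ∂P) ^ (1 / p) *
        (P {ω | τ ≤ ‖V ω‖}).toReal ^ (1 - 1 / p) -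
      τ * (P {ω | τ ≤ ‖V ω‖}).toReal := by
  rw [← hmean, ← measureReal_def]
  refine (norm_integral_sub_integral_clip_le hint hτ.le).trans (sub_le_sub_right ?_ _)
  exact setIntegral_norm_le_integral_norm_rpow_mul hint.aestronglyMeasurable hp hmom _

/-- Hölder-type clipping bias bound. -/
theorem clipping_bias {d : ℕ} {Ω : Type*} [MeasurableSpace Ω] (P : MeasureTheory.Measure Ω)
    [MeasureTheory.IsProbabilityMeasure P]
    (V : Ω → EuclideanSpace ℝ (Fin d)) (v : EuclideanSpace ℝ (Fin d))
    (hmeas : Measurable V)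
    (hint : MeasureTheory.Integrable V P) (hmean : (∫ ω, V ω ∂P) = v)
    (p τ : ℝ) (hp : 1 < p) (hτ : 0 < τ)
    (hmom : MeasureTheory.Integrable (fun ω => ‖V ω‖ ^ p) P) :
    ‖v - ∫ ω, clip (V ω) τ ∂P‖ ≤
      (∫ ω, ‖V ω‖ ^ p ∂P) ^ (1 / p) *
        (P {ω | τ ≤ ‖V ω‖}).toReal ^ (1 - 1 / p) -
      τ * (P {ω | τ ≤ ‖V ω‖}).toReal :=
  clipping_bias_general P V v hint hmean p τ hp hτ hmom
end

section
/- Let v(ζ) be a random vector in ℝ^d with E[v(ζ)] = v, and clip(z, τ) = z · min(1, τ/‖z‖). Then for any p > 1, ‖v − E[clip(v(ζ), τ)]‖ ≤ E[‖v(ζ)‖^p] / τ^{p−1}. -/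
open MeasureTheory

lemma clip_norm_le {d : ℕ} (z : EuclideanSpace ℝ (Fin d)) (τ : ℝ) (hτ : 0 < τ) :
    ‖clip z τ‖ ≤ ‖z‖ := by
  rw [clip, norm_smul]
  have h0 : 0 ≤ min 1 (τ / ‖z‖) := le_min one_pos.le (by positivity)
  have h1 : min 1 (τ / ‖z‖) ≤ 1 := min_le_left _ _
  calc ‖min 1 (τ / ‖z‖)‖ * ‖z‖ ≤ 1 * ‖z‖ := by
        apply mul_le_mul_of_nonneg_right _ (norm_nonneg _)
        rw [Real.norm_eq_abs, abs_of_nonneg h0]; exact h1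
    _ = ‖z‖ := one_mul _

lemma clip_diff_le {d : ℕ} (z : EuclideanSpace ℝ (Fin d)) (p τ : ℝ)
    (hp : 1 < p) (hτ : 0 < τ) :
    ‖z - clip z τ‖ ≤ ‖z‖ ^ p / τ ^ (p - 1) := by
  have hrhs : 0 ≤ ‖z‖ ^ p / τ ^ (p - 1) := by positivity
  rcases eq_or_ne z 0 with rfl | hz
  · rw [clip, smul_zero, sub_self, norm_zero]; positivity
  have h0 : 0 < ‖z‖ := norm_pos_iff.mpr hz
  rcases le_or_gt ‖z‖ τ with h | h
  · have hmin : min 1 (τ / ‖z‖) = 1 := by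
      rw [min_eq_left]; rw [le_div_iff₀ h0, one_mul]; exact h
    rw [clip, hmin, one_smul, sub_self, norm_zero]; exact hrhs
  · have hmin : min 1 (τ / ‖z‖) = τ / ‖z‖ := by
      rw [min_eq_right]; rw [div_le_one h0]; exact h.le
    have : z - clip z τ = (1 - τ / ‖z‖) • z := by
      rw [clip, hmin, sub_smul, one_smul]
    rw [this, norm_smul, Real.norm_eq_abs, abs_of_nonneg
      (by rw [sub_nonneg, div_le_one h0]; exact h.le)]
    have key : ‖z‖ * τ ^ (p - 1) ≤ ‖z‖ ^ p := by
      have : τ ^ (p - 1) ≤ ‖z‖ ^ (p - 1) :=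
        Real.rpow_le_rpow hτ.le h.le (by linarith)
      calc ‖z‖ * τ ^ (p - 1) ≤ ‖z‖ * ‖z‖ ^ (p - 1) := by
            exact mul_le_mul_of_nonneg_left this h0.le
        _ = ‖z‖ ^ p := by
            nth_rewrite 1 [← Real.rpow_one ‖z‖]
            rw [← Real.rpow_add h0]; norm_num
    have hτp : 0 < τ ^ (p - 1) := Real.rpow_pos_of_pos hτ _
    rw [le_div_iff₀ hτp]
    calc (1 - τ / ‖z‖) * ‖z‖ * τ ^ (p - 1)
        ≤ ‖z‖ * τ ^ (p - 1) := by
          apply mul_le_mul_of_nonneg_right _ hτp.le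
          nlinarith [div_nonneg hτ.le h0.le, mul_div_cancel₀ τ h0.ne']
      _ ≤ ‖z‖ ^ p := key

/-- Simplified clipping bias bound via Markov's inequality. -/
theorem clipping_bias_simple {d : ℕ} {Ω : Type*} [MeasurableSpace Ω] (P : MeasureTheory.Measure Ω)
    [MeasureTheory.IsProbabilityMeasure P]
    (V : Ω → EuclideanSpace ℝ (Fin d)) (v : EuclideanSpace ℝ (Fin d))
    (hmeas : Measurable V)
    (hint : MeasureTheory.Integrable V P) (hmean : (∫ ω, V ω ∂P) = v)
    (p τ : ℝ) (hp : 1 < p) (hτ : 0 < τ)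
    (hmom : MeasureTheory.Integrable (fun ω => ‖V ω‖ ^ p) P) :
    ‖v - ∫ ω, clip (V ω) τ ∂P‖ ≤ (∫ ω, ‖V ω‖ ^ p ∂P) / τ ^ (p - 1) := by
  have hclipmeas : Measurable (fun ω => clip (V ω) τ) := by
    unfold clip
    exact (measurable_const.min (measurable_const.div hmeas.norm)).smul hmeas
  have hclipint : Integrable (fun ω => clip (V ω) τ) P := by
    refine hint.mono hclipmeas.aestronglyMeasurable ?_
    filter_upwards with ω
    exact clip_norm_le _ _ hτ
  rw [← hmean, ← integral_sub hint hclipint]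
  calc ‖∫ ω, (V ω - clip (V ω) τ) ∂P‖
      ≤ ∫ ω, ‖V ω - clip (V ω) τ‖ ∂P := norm_integral_le_integral_norm _
    _ ≤ ∫ ω, ‖V ω‖ ^ p / τ ^ (p - 1) ∂P := by
        apply integral_mono (hint.sub hclipint).norm (hmom.div_const _)
        intro ω
        exact clip_diff_le _ _ _ hp hτ
    _ = (∫ ω, ‖V ω‖ ^ p ∂P) / τ ^ (p - 1) := integral_div _ _
end

section
/- Let f_i(w) = ‖w − w_i*‖ for points w_1*, …, w_n* ∈ ℝ^d, f(w) = (1/n)Σ_i ‖w − w_i*‖, w̄* = (1/n)Σ_i w_i*, and w* a minimizer of f. Define D = max(2‖w̄* − w*‖, (4/n)Σ_i ‖w̄* − w_i*‖). Then for every w with ‖w − w*‖ ≥ D, f(w) − f(w*) ≥ (1/4)‖w − w*‖. -/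
/-!
The average distance `f` dominates the distance to the centroid `w̄*` (triangle inequality
applied to `w - w̄* = (1/n) Σ (w - w_i*)`). Far from `w*` this gives
`f w ≥ ‖w - w̄*‖ ≥ ‖w - w*‖ / 2`, while `f w* ≤ f w̄* ≤ D / 4 ≤ ‖w - w*‖ / 4`.
-/

open Finset

theorem norm_sub_average_le_average_norm_sub {E ι : Type*} [SeminormedAddCommGroup E]
    [NormedSpace ℝ E] [Fintype ι] [Nonempty ι] (x : ι → E) (v : E) :
    ‖v - (Fintype.card ι : ℝ)⁻¹ • ∑ i, x i‖ ≤ (Fintype.card ι : ℝ)⁻¹ * ∑ i, ‖v - x i‖ := by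
  have hcard : (Fintype.card ι : ℝ) ≠ 0 := Nat.cast_ne_zero.mpr Fintype.card_ne_zero
  have hsum : v - (Fintype.card ι : ℝ)⁻¹ • ∑ i, x i
      = (Fintype.card ι : ℝ)⁻¹ • ∑ i, (v - x i) := by
    rw [sum_sub_distrib, sum_const, card_univ, ← Nat.cast_smul_eq_nsmul ℝ, smul_sub,
      smul_smul, inv_mul_cancel₀ hcard, one_smul]
  rw [hsum, norm_smul, Real.norm_of_nonneg (by positivity)]
  exact mul_le_mul_of_nonneg_left (norm_sum_le _ _) (by positivity)

theorem quarter_dist_le_sub_of_dist_le {X : Type*} [PseudoMetricSpace X] {f : X → ℝ}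
    {c m w : X} (hf : ∀ v, dist v c ≤ f v) (hm : f m ≤ f c)
    (hcm : 2 * dist c m ≤ dist w m) (hfc : 4 * f c ≤ dist w m) :
    (1 / 4 : ℝ) * dist w m ≤ f w - f m := by
  have htri : dist w m ≤ dist w c + dist c m := dist_triangle w c m
  linarith [hf w]

/-- Sharpness of the average-distance function far from its minimizer. -/
theorem geometric_median_sharpness {d n : ℕ} (hn : 0 < n)
    (ws : Fin n → EuclideanSpace ℝ (Fin d))
    (f : EuclideanSpace ℝ (Fin d) → ℝ)
    (hf : f = fun w => (1 / n : ℝ) * ∑ i, ‖w - ws i‖)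
    (wstar : EuclideanSpace ℝ (Fin d)) (hmin : ∀ w, f wstar ≤ f w)
    (wbar : EuclideanSpace ℝ (Fin d)) (hbar : wbar = (1 / n : ℝ) • ∑ i, ws i)
    (D : ℝ)
    (hD : D = max (2 * ‖wbar - wstar‖) ((4 / n : ℝ) * ∑ i, ‖wbar - ws i‖)) :
    ∀ w, D ≤ ‖w - wstar‖ → (1 / 4 : ℝ) * ‖w - wstar‖ ≤ f w - f wstar := by
  intro w hw
  have : Nonempty (Fin n) := ⟨⟨0, hn⟩⟩
  have hcentroid : ∀ v, dist v wbar ≤ f v := fun v => by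
    simpa [dist_eq_norm, hf, hbar] using norm_sub_average_le_average_norm_sub ws v
  have hbar_near : 2 * dist wbar wstar ≤ D := by
    rw [hD, dist_eq_norm]
    exact le_max_left _ _
  have hfbar : 4 * f wbar ≤ D := by
    rw [hD, hf]
    exact le_max_of_le_right (le_of_eq (by ring))
  rw [← dist_eq_norm] at hw ⊢
  exact quarter_dist_le_sub_of_dist_le hcentroid (hmin wbar) (hbar_near.trans hw) (hfbar.trans hw)
end

section
/- Let x̄ ∈ ℝ^d with x̄ ≠ 0, f(w) = −⟨w, x̄⟩ + 2‖x̄‖·max(‖w‖ − 1, 0), and w* = x̄/‖x̄‖. Then for every w with ‖w‖ < 3: f(w) − f(w*) ≥ (‖x̄‖/2)·‖w − w*‖². -/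
/-! The inner-product terms cancel: with `u = x̄/‖x̄‖`, both `f(w) − f(u)` and
`(‖x̄‖/2)‖w − u‖²` contain `−‖x̄‖⟪w, u⟫`, and what remains is the scalar inequality
`r² ≤ 1 + 4 max(r − 1, 0)` for `r = ‖w‖`, which holds exactly on `[-1, 3]`. -/

open RealInnerProductSpace

theorem sq_le_one_add_four_mul_max_sub_one {r : ℝ} (h₁ : -1 ≤ r) (h₃ : r ≤ 3) :
    r ^ 2 ≤ 1 + 4 * max (r - 1) 0 := by
  rcases le_total r 1 with hr | hr
  · rw [max_eq_right (by linarith)]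
    nlinarith
  · rw [max_eq_left (by linarith)]
    nlinarith

theorem norm_sub_sq_div_two_le_of_norm_eq_one {E : Type*} [NormedAddCommGroup E]
    [InnerProductSpace ℝ E] {u w : E} (hu : ‖u‖ = 1) (hw : ‖w‖ ≤ 3) :
    ‖w - u‖ ^ 2 / 2 ≤ 1 - ⟪w, u⟫ + 2 * max (‖w‖ - 1) 0 := by
  have hr := sq_le_one_add_four_mul_max_sub_one (by linarith [norm_nonneg w]) hw
  rw [norm_sub_sq_real, hu]
  linarith

/-- Quadratic growth of `f(w) = −⟨w, x̄⟩ + 2‖x̄‖·max(‖w‖ − 1, 0)` near its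
minimizer `w* = x̄/‖x̄‖`, for `‖w‖ < 3`. -/
theorem lb_quadratic_growth {d : ℕ} (xb : EuclideanSpace ℝ (Fin d)) (hx : xb ≠ 0)
    (f : EuclideanSpace ℝ (Fin d) → ℝ)
    (hf : f = fun w => - (inner ℝ w xb : ℝ) + 2 * ‖xb‖ * max (‖w‖ - 1) 0)
    (wstar : EuclideanSpace ℝ (Fin d)) (hws : wstar = ‖xb‖⁻¹ • xb) :
    ∀ w, ‖w‖ < 3 → (‖xb‖ / 2) * ‖w - wstar‖ ^ 2 ≤ f w - f wstar := by
  intro w hw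
  have hunit : ‖wstar‖ = 1 := hws ▸ norm_smul_inv_norm hx
  have hinner (v : EuclideanSpace ℝ (Fin d)) : ⟪v, xb⟫ = ‖xb‖ * ⟪v, wstar⟫ := by
    rw [hws, real_inner_smul_right, mul_inv_cancel_left₀ (norm_ne_zero_iff.mpr hx)]
  have hgrowth := mul_le_mul_of_nonneg_left
    (norm_sub_sq_div_two_le_of_norm_eq_one hunit hw.le) (norm_nonneg xb)
  have hself : ⟪wstar, wstar⟫ = 1 := by rw [real_inner_self_eq_norm_sq, hunit, one_pow]
  subst hf
  simp only [hinner, hself, hunit, sub_self, max_self]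
  linarith
end

section
/- Let x̄ ∈ ℝ^d, f(w) = −⟨w, x̄⟩ + 2‖x̄‖·max(‖w‖ − 1, 0) with minimizer w* (= x̄/‖x̄‖ if x̄ ≠ 0). Then for every w ∈ ℝ^d: f(w) − f(w*) ≥ 2‖x̄‖ · min(1, (1/4)‖w − w*‖²). -/
/-! Writing `x̄ = ‖x̄‖ u` with `‖u‖ = 1`, we get `w* = u` and
`f w - f w* = ‖x̄‖ (1 - ⟪w, u⟫ + 2 max (‖w‖ - 1) 0)`, so it suffices to bound the bracket.
For `‖w‖ ≤ 3` the identity `‖w - u‖² = ‖w‖² - 2⟪w, u⟫ + 1` turns it into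
`‖w - u‖² / 2 + (1 - ‖w‖²) / 2 + 2 max (‖w‖ - 1) 0 ≥ ‖w - u‖² / 2`;
for `‖w‖ ≥ 3` Cauchy–Schwarz gives `⟪w, u⟫ ≤ ‖w‖`, so the bracket is at least `‖w‖ - 1 ≥ 2`. -/

open RealInnerProductSpace

section UnitDirection

variable {E : Type*} [NormedAddCommGroup E] [InnerProductSpace ℝ E] {u : E}

lemma sq_norm_sub_div_two_le_of_norm_le_three (hu : ‖u‖ = 1) {w : E} (hw : ‖w‖ ≤ 3) :
    ‖w - u‖ ^ 2 / 2 ≤ 1 - ⟪w, u⟫ + 2 * max (‖w‖ - 1) 0 := by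
  have hsq := norm_sub_sq_real w u
  rw [hu] at hsq
  have hw0 := norm_nonneg w
  rcases le_total ‖w‖ 1 with hw1 | hw1
  · rw [max_eq_right (by linarith)]
    nlinarith
  · rw [max_eq_left (by linarith)]
    nlinarith

lemma two_le_of_three_le_norm (hu : ‖u‖ = 1) {w : E} (hw : 3 ≤ ‖w‖) :
    2 ≤ 1 - ⟪w, u⟫ + 2 * max (‖w‖ - 1) 0 := by
  have hcs : ⟪w, u⟫ ≤ ‖w‖ := by simpa [hu] using real_inner_le_norm w u
  rw [max_eq_left (by linarith)]
  linarith

lemma two_mul_min_le_of_norm_eq_one (hu : ‖u‖ = 1) (w : E) :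
    2 * min 1 ((1 / 4 : ℝ) * ‖w - u‖ ^ 2) ≤ 1 - ⟪w, u⟫ + 2 * max (‖w‖ - 1) 0 := by
  rcases le_total ‖w‖ 3 with hw | hw
  · have := sq_norm_sub_div_two_le_of_norm_le_three hu hw
    have := min_le_right (1 : ℝ) ((1 / 4 : ℝ) * ‖w - u‖ ^ 2)
    linarith
  · have := two_le_of_three_le_norm hu hw
    have := min_le_left (1 : ℝ) ((1 / 4 : ℝ) * ‖w - u‖ ^ 2)
    linarith

end UnitDirection

/-- Combined growth bound:
`f(w) − f(w*) ≥ 2‖x̄‖·min(1, (1/4)‖w − w*‖²)` for all `w`. -/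
theorem lb_combined_growth {d : ℕ} (xb : EuclideanSpace ℝ (Fin d))
    (f : EuclideanSpace ℝ (Fin d) → ℝ)
    (hf : f = fun w => - (inner ℝ w xb : ℝ) + 2 * ‖xb‖ * max (‖w‖ - 1) 0)
    (wstar : EuclideanSpace ℝ (Fin d))
    (hws : xb ≠ 0 → wstar = ‖xb‖⁻¹ • xb) :
    ∀ w, 2 * ‖xb‖ * min 1 ((1 / 4 : ℝ) * ‖w - wstar‖ ^ 2) ≤ f w - f wstar := by
  intro w
  by_cases hx : xb = 0
  · simp [hf, hx]
  have hR : 0 < ‖xb‖ := norm_pos_iff.mpr hx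
  have hunit : ‖wstar‖ = 1 := by
    rw [hws hx, norm_smul, norm_inv, norm_norm, inv_mul_cancel₀ hR.ne']
  have hinner : ⟪w, xb⟫ = ‖xb‖ * ⟪w, wstar⟫ := by
    rw [hws hx, real_inner_smul_right, mul_inv_cancel_left₀ hR.ne']
  have hinner_star : ⟪wstar, xb⟫ = ‖xb‖ := by
    rw [hws hx, real_inner_smul_left, real_inner_self_eq_norm_sq]
    field_simp
  have hgap : f w - f wstar = ‖xb‖ * (1 - ⟪w, wstar⟫ + 2 * max (‖w‖ - 1) 0) := by
    simp only [hf, hinner, hinner_star, hunit, sub_self, max_self]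
    ring
  rw [hgap, mul_comm 2 ‖xb‖, mul_assoc]
  exact mul_le_mul_of_nonneg_left (two_mul_min_le_of_norm_eq_one hunit w) hR.le
end

section
/- Let f_1, …, f_n : ℝ^d → ℝ be differentiable with ‖∇f_i(w)‖ ≤ G_i for all w, and let f = (1/n)Σ_i f_i. If (1/n)Σ_i G_i^k ≤ M for some k ≥ 1, then for every w ∈ ℝ^d and clip norm τ > 0: ‖(1/n)Σ_i clip(∇f_i(w), τ) − ∇f(w)‖ ≤ M/τ^{k−1}, where clip(z, τ) = z·min(1, τ/‖z‖). -/
lemma clip_sub_norm_le {d : ℕ} (z : EuclideanSpace ℝ (Fin d)) (τ Gi k : ℝ)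
    (hτ : 0 < τ) (hk : 1 ≤ k) (hz : ‖z‖ ≤ Gi) :
    ‖clip z τ - z‖ ≤ Gi ^ k / τ ^ (k - 1) := by
  have hGi : 0 ≤ Gi := le_trans (norm_nonneg z) hz
  have hk1 : 0 ≤ k - 1 := by linarith
  have hτp : 0 < τ ^ (k - 1) := Real.rpow_pos_of_pos hτ _
  rcases le_or_gt ‖z‖ τ with h | h
  · have hc : clip z τ = z := by
      unfold clip
      rcases eq_or_ne ‖z‖ 0 with h0 | h0
      · have hz0 : z = 0 := norm_eq_zero.mp h0
        simp [hz0]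
      · have hpos : 0 < ‖z‖ := lt_of_le_of_ne (norm_nonneg z) (Ne.symm h0)
        have : (1 : ℝ) ≤ τ / ‖z‖ := (one_le_div hpos).mpr h
        rw [min_eq_left this, one_smul]
    rw [hc, sub_self, norm_zero]
    positivity
  · have hz0 : 0 < ‖z‖ := hτ.trans h
    have hmin : min 1 (τ / ‖z‖) = τ / ‖z‖ :=
      min_eq_right ((div_le_one hz0).mpr h.le)
    have hcl : clip z τ - z = (τ / ‖z‖ - 1) • z := by
      unfold clip
      rw [hmin, sub_smul, one_smul]
    have habs : ‖(τ / ‖z‖ - 1 : ℝ)‖ = 1 - τ / ‖z‖ := by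
      rw [Real.norm_eq_abs, abs_of_nonpos (by
        have : τ / ‖z‖ ≤ 1 := (div_le_one hz0).mpr h.le
        linarith)]
      ring
    have hnorm : ‖clip z τ - z‖ = ‖z‖ - τ := by
      rw [hcl, norm_smul, habs, sub_mul, one_mul, div_mul_cancel₀ _ (ne_of_gt hz0)]
    rw [hnorm]
    have h2 : τ ^ (k - 1) ≤ ‖z‖ ^ (k - 1) := Real.rpow_le_rpow hτ.le h.le hk1
    have h3 : ‖z‖ ^ k ≤ Gi ^ k := Real.rpow_le_rpow (norm_nonneg z) hz (by linarith)
    have hzk : ‖z‖ ^ k = ‖z‖ * ‖z‖ ^ (k - 1) := by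
      have h := Real.rpow_add hz0 1 (k - 1)
      rw [Real.rpow_one] at h
      rw [← h]; ring_nf
    have h4 : ‖z‖ * τ ^ (k - 1) ≤ ‖z‖ ^ k := by
      rw [hzk]; exact mul_le_mul_of_nonneg_left h2 (norm_nonneg z)
    have h5 : ‖z‖ ≤ ‖z‖ ^ k / τ ^ (k - 1) := (le_div_iff₀ hτp).mpr h4
    have h6 : ‖z‖ ^ k / τ ^ (k - 1) ≤ Gi ^ k / τ ^ (k - 1) := by gcongr
    linarith

/-- Clipping bias bound for the empirical average of per-sample gradients. -/
theorem avg_clip_bias {d n : ℕ} (hn : 0 < n)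
    (f : Fin n → EuclideanSpace ℝ (Fin d) → ℝ)
    (hdiff : ∀ i, Differentiable ℝ (f i))
    (G : Fin n → ℝ) (hG : ∀ i w, ‖gradient (f i) w‖ ≤ G i)
    (k M : ℝ) (hk : 1 ≤ k) (hM : (1 / n : ℝ) * ∑ i, G i ^ k ≤ M)
    (F : EuclideanSpace ℝ (Fin d) → ℝ)
    (hF : F = fun w => (1 / n : ℝ) * ∑ i, f i w)
    (τ : ℝ) (hτ : 0 < τ) (w : EuclideanSpace ℝ (Fin d)) :
    ‖(1 / n : ℝ) • (∑ i, clip (gradient (f i) w) τ) - gradient F w‖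
      ≤ M / τ ^ (k - 1) := by
  have hτp : 0 < τ ^ (k - 1) := Real.rpow_pos_of_pos hτ _
  have hdsum : DifferentiableAt ℝ (fun w => ∑ i, f i w) w :=
    DifferentiableAt.fun_sum (fun i _ => (hdiff i) w)
  have h1 : fderiv ℝ F w = (1 / n : ℝ) • ∑ i, fderiv ℝ (f i) w := by
    rw [hF, fderiv_const_mul hdsum]
    congr 1
    exact fderiv_fun_sum (fun i _ => (hdiff i) w)
  have hgrad : gradient F w = (1 / n : ℝ) • ∑ i, gradient (f i) w := by
    unfold gradient
    rw [h1, map_smul, map_sum]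
  rw [hgrad, ← smul_sub, ← Finset.sum_sub_distrib, norm_smul]
  have hnn : ‖(1 / n : ℝ)‖ = 1 / n := by
    rw [Real.norm_eq_abs, abs_of_nonneg]
    positivity
  rw [hnn]
  have hnpos : (0 : ℝ) ≤ 1 / n := by positivity
  calc (1 / n : ℝ) * ‖∑ i, (clip (gradient (f i) w) τ - gradient (f i) w)‖
      ≤ (1 / n : ℝ) * ∑ i, ‖clip (gradient (f i) w) τ - gradient (f i) w‖ :=
        mul_le_mul_of_nonneg_left (norm_sum_le _ _) hnpos
    _ ≤ (1 / n : ℝ) * ∑ i, G i ^ k / τ ^ (k - 1) := by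
        apply mul_le_mul_of_nonneg_left _ hnpos
        exact Finset.sum_le_sum fun i _ =>
          clip_sub_norm_le _ τ (G i) k hτ hk (hG i w)
    _ = ((1 / n : ℝ) * ∑ i, G i ^ k) / τ ^ (k - 1) := by
        rw [← Finset.sum_div, mul_div_assoc]
    _ ≤ M / τ ^ (k - 1) := by gcongr
end
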